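/- arXiv:1308.5459 — 3 statements merged into one kernel-verified Lean document; each statement's English description precedes it below -/
import Mathlib

section
/- For 1 ≤ h < n and a uniformly random permutation Π of [n], the probability that #{k ∈ [n-h] : Π(k+h) = Π(k)+1} = m equals Σ_{ℓ=m}^{m+h} ((1/ℓ!) Σ_{k=0}^{n-ℓ} (-1)^k/k!) · C(n-h, m)·C(h, ℓ-m)/C(n, ℓ), for 0 ≤ m ≤ n-h. -/
/-!
Write `A π` for the set of positions `k` with `k + h < n` and `π (k + h) = π k + 1`. If `T` is a
set of such positions, deleting the largest position `k + h` constrained by `T`, together with its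
value, glues it to `k` and leaves a permutation of `n - 1` points constrained by the rest of `T`;
hence exactly `(n - #T)!` permutations satisfy `T ⊆ A π`. Inclusion–exclusion over the subsets of
`{k | k + h < n}` then counts the `π` with `#A π = m` as `C(n - h, m) · P(h, n - h - m)`, where
`P(a, c) = Σᵢ (-1)ⁱ C(c, i) (a + c - i)!`. This satisfies `P(a + 1, c) = P(a, c + 1) + P(a, c)`,
so `P(h, c) = Σₛ C(h, s) D(c + s)` with `D(r) = P(0, r)` the derangement numbers, which is the
stated sum over the number `ℓ` of fixed points.
-/

open Finset Nat

namespace Fin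

variable {N : ℕ}

lemma val_succAbove (p : Fin (N + 1)) (x : Fin N) :
    (p.succAbove x : ℕ) = if (x : ℕ) < p then (x : ℕ) else (x : ℕ) + 1 := by
  unfold succAbove
  split_ifs <;> simp_all [lt_def]

lemma val_eq_val_succAbove_add_one_iff (v : Fin (N + 1)) (y : Fin N) :
    (v : ℕ) = v.succAbove y + 1 ↔ v = y.succ := by
  rw [val_succAbove, Fin.ext_iff, val_succ]
  split_ifs <;> omega

lemma val_succAbove_eq_val_succAbove_add_one_iff (v : Fin (N + 1)) (x y : Fin N) :
    (v.succAbove y : ℕ) = v.succAbove x + 1 ↔ (y : ℕ) = x + 1 ∧ (v : ℕ) ≠ x + 1 := by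
  rw [val_succAbove, val_succAbove]
  split_ifs <;> omega

end Fin

namespace Equiv.Perm

variable {N : ℕ}

/-- Deletes `p` from the domain and `π p` from the codomain, renumbering the remaining points of
each in increasing order. -/
def deleteAt (p : Fin (N + 1)) (π : Perm (Fin (N + 1))) : Perm (Fin N) :=
  removeNone ((finSuccEquiv' p).symm.trans (π.trans (finSuccEquiv' (π p))))

def insertAt (p v : Fin (N + 1)) (σ : Perm (Fin N)) : Perm (Fin (N + 1)) :=
  (finSuccEquiv' p).trans (σ.optionCongr.trans (finSuccEquiv' v).symm)

lemma succAbove_deleteAt (p : Fin (N + 1)) (π : Perm (Fin (N + 1))) (x : Fin N) :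
    (π p).succAbove (deleteAt p π x) = π (p.succAbove x) := by
  obtain ⟨u, hu⟩ := Fin.exists_succAbove_eq (π.injective.ne (Fin.succAbove_ne p x))
  have hsome :
      ((finSuccEquiv' p).symm.trans (π.trans (finSuccEquiv' (π p)))) (some x) = some u := by
    simp [← hu]
  have hdel : deleteAt p π x = u :=
    Option.some_injective _ ((removeNone_some _ ⟨u, hsome⟩).trans hsome)
  rw [hdel, hu]

@[simp]
lemma insertAt_apply_self (p v : Fin (N + 1)) (σ : Perm (Fin N)) : insertAt p v σ p = v := by
  simp [insertAt]

@[simp]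
lemma insertAt_apply_succAbove (p v : Fin (N + 1)) (σ : Perm (Fin N)) (x : Fin N) :
    insertAt p v σ (p.succAbove x) = v.succAbove (σ x) := by
  simp [insertAt]

@[simp]
lemma deleteAt_insertAt (p v : Fin (N + 1)) (σ : Perm (Fin N)) :
    deleteAt p (insertAt p v σ) = σ := by
  ext x : 1
  apply Fin.succAbove_right_injective (p := v)
  simpa using succAbove_deleteAt p (insertAt p v σ) x

lemma insertAt_deleteAt (p : Fin (N + 1)) (π : Perm (Fin (N + 1))) :
    insertAt p (π p) (deleteAt p π) = π := by
  ext i : 1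
  rcases eq_or_ne i p with rfl | hne
  · rw [insertAt_apply_self]
  · obtain ⟨x, rfl⟩ := Fin.exists_succAbove_eq hne
    rw [insertAt_apply_succAbove, succAbove_deleteAt]

lemma card_filter_deleteAt (p : Fin (N + 1)) (q : Fin N) (P : Perm (Fin N) → Prop)
    [DecidablePred P] :
    #{π : Perm (Fin (N + 1)) | (π p : ℕ) = π (p.succAbove q) + 1 ∧ P (deleteAt p π)} =
      #{σ | P σ} := by
  refine card_nbij' (deleteAt p) (fun σ ↦ insertAt p (σ q).succ σ) ?_ ?_ ?_ ?_
  · intro π hπ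
    simp only [coe_filter, mem_univ, true_and, Set.mem_ofPred_eq] at hπ ⊢
    exact hπ.2
  · intro σ hσ
    simp only [coe_filter, mem_univ, true_and, Set.mem_ofPred_eq] at hσ ⊢
    simp [hσ]
  · intro π hπ
    simp only [coe_filter, mem_univ, true_and, Set.mem_ofPred_eq] at hπ
    have hp := hπ.1
    rw [← succAbove_deleteAt, Fin.val_eq_val_succAbove_add_one_iff] at hp
    exact (congrArg (insertAt p · _) hp).symm.trans (insertAt_deleteAt p π)
  · intro σ _
    exact deleteAt_insertAt _ _ σ

lemma val_apply_succAbove_eq_add_one_iff {p : Fin (N + 1)} {π : Perm (Fin (N + 1))} {q : Fin N}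
    (hπ : (π p : ℕ) = π (p.succAbove q) + 1) {x : Fin N} (hx : x ≠ q) (y : Fin N) :
    (π (p.succAbove y) : ℕ) = π (p.succAbove x) + 1 ↔
      (deleteAt p π y : ℕ) = deleteAt p π x + 1 := by
  rw [← succAbove_deleteAt, Fin.val_eq_val_succAbove_add_one_iff] at hπ
  rw [← succAbove_deleteAt, ← succAbove_deleteAt, Fin.val_succAbove_eq_val_succAbove_add_one_iff,
    hπ, Fin.val_succ, Ne, add_left_inj, ← Fin.ext_iff, (deleteAt p π).injective.eq_iff]
  simp [hx.symm]

/-- Positions are natural numbers so that `S` survives the deletion of a larger position. -/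
def ShiftAdjacentOn {n : ℕ} (h : ℕ) (S : Finset ℕ) (π : Perm (Fin n)) : Prop :=
  ∀ i j : Fin n, (i : ℕ) ∈ S → (j : ℕ) = i + h → (π j : ℕ) = π i + 1

instance {n : ℕ} (h : ℕ) (S : Finset ℕ) : DecidablePred (ShiftAdjacentOn (n := n) h S) :=
  fun _ ↦ by unfold ShiftAdjacentOn; infer_instance

lemma shiftAdjacentOn_insert_iff {h a : ℕ} (hh : 0 < h) {s : Finset ℕ} (hs : ∀ x ∈ s, x < a)
    (ha : a + h < N + 1) (π : Perm (Fin (N + 1))) :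
    ShiftAdjacentOn h (insert a s) π ↔
      (π ⟨a + h, ha⟩ : ℕ) = π ((⟨a + h, ha⟩ : Fin (N + 1)).succAbove ⟨a, by omega⟩) + 1 ∧
        ShiftAdjacentOn h s (deleteAt ⟨a + h, ha⟩ π) := by
  set p : Fin (N + 1) := ⟨a + h, ha⟩
  have succAbove_eq : ∀ (x : Fin N) (i : Fin (N + 1)), (x : ℕ) = i → (i : ℕ) < a + h →
      p.succAbove x = i := fun x i hxi hi ↦ by
    ext
    rw [Fin.val_succAbove, if_pos (by simp [p]; omega), hxi]
  have hq : p.succAbove ⟨a, by omega⟩ = ⟨a, by omega⟩ := succAbove_eq _ _ rfl (by simp; omega)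
  constructor
  · intro hπ
    have hp : (π p : ℕ) = π (p.succAbove ⟨a, by omega⟩) + 1 := by
      rw [hq]
      exact hπ _ _ (mem_insert_self a s) rfl
    refine ⟨hp, fun i j hi hj ↦ ?_⟩
    have hia := hs i hi
    rw [← val_apply_succAbove_eq_add_one_iff hp (Fin.ne_of_val_ne (by simp; omega)),
      succAbove_eq i ⟨i, by omega⟩ rfl (by simp; omega),
      succAbove_eq j ⟨j, by omega⟩ rfl (by simp; omega)]
    exact hπ _ _ (mem_insert_of_mem hi) hj
  · rintro ⟨hp, hσ⟩ i j hi hj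
    rcases mem_insert.mp hi with hia | his
    · rwa [show j = p from Fin.ext (by simp [p, hj, hia]), show i = ⟨a, by omega⟩ from Fin.ext hia,
        ← hq]
    · have hia := hs i his
      obtain ⟨x, hxi, rfl⟩ : ∃ x : Fin N, (x : ℕ) = i ∧ p.succAbove x = i :=
        ⟨⟨i, by omega⟩, rfl, succAbove_eq _ _ rfl (by omega)⟩
      obtain ⟨y, hyj, rfl⟩ : ∃ y : Fin N, (y : ℕ) = j ∧ p.succAbove y = j :=
        ⟨⟨j, by omega⟩, rfl, succAbove_eq _ _ rfl (by omega)⟩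
      rw [val_apply_succAbove_eq_add_one_iff hp (Fin.ne_of_val_ne (by simp; omega))]
      exact hσ _ _ (hxi ▸ his) (by omega)

theorem card_filter_shiftAdjacentOn {h : ℕ} (hh : 0 < h) (S : Finset ℕ) :
    ∀ {n : ℕ}, (∀ k ∈ S, k + h < n) → #{π : Perm (Fin n) | ShiftAdjacentOn h S π} = (n - #S)! := by
  induction S using Finset.induction_on_max with
  | empty =>
    intro n _
    simp [ShiftAdjacentOn, Fintype.card_perm]
  | insert a s hs ih =>
    intro n hS
    have ha := hS a (mem_insert_self a s)
    obtain ⟨N, rfl⟩ : ∃ N, n = N + 1 := ⟨n - 1, by omega⟩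
    simp_rw [shiftAdjacentOn_insert_iff hh hs ha]
    rw [card_filter_deleteAt, ih (fun k hk ↦ by linarith [hs k hk]),
      card_insert_of_notMem (fun has ↦ (hs a has).false)]
    congr 1
    omega

end Equiv.Perm

namespace Finset

variable {α ι : Type*} [DecidableEq α]

theorem sum_powerset_sdiff_neg_one_pow_card_mul_ite {V M B : Finset α} (hB : B ⊆ V) :
    ∑ U ∈ (V \ M).powerset, (-1 : ℤ) ^ #U * (if M ∪ U ⊆ B then 1 else 0) =
      if B = M then 1 else 0 := by
  by_cases hM : M ⊆ B
  · have hfilter : {U ∈ (V \ M).powerset | M ∪ U ⊆ B} = (B \ M).powerset := by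
      ext U
      simp only [mem_filter, mem_powerset, union_subset_iff, subset_sdiff]
      constructor
      · rintro ⟨⟨-, hUM⟩, -, hUB⟩
        exact ⟨hUB, hUM⟩
      · rintro ⟨hUB, hUM⟩
        exact ⟨⟨hUB.trans hB, hUM⟩, hM, hUB⟩
    simp_rw [mul_ite, mul_one, mul_zero]
    rw [← sum_filter, hfilter, sum_powerset_neg_one_pow_card]
    exact if_congr (sdiff_eq_empty_iff_subset.trans ⟨fun h ↦ h.antisymm hM, fun h ↦ h.le⟩) rfl rfl
  · rw [if_neg (fun h ↦ hM h.ge)]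
    refine sum_eq_zero fun U _ ↦ ?_
    rw [if_neg (fun h ↦ hM (subset_union_left.trans h)), mul_zero]

variable [Fintype ι]

theorem card_filter_eq_eq_sum_powerset {A : ι → Finset α} {V : Finset α} (hA : ∀ x, A x ⊆ V)
    (M : Finset α) :
    (#{x | A x = M} : ℤ) = ∑ U ∈ (V \ M).powerset, (-1) ^ #U * (#{x | M ∪ U ⊆ A x} : ℤ) := by
  simp_rw [card_filter, Nat.cast_sum, Nat.cast_ite, Nat.cast_one, Nat.cast_zero, mul_sum]
  rw [sum_comm]
  exact sum_congr rfl fun x _ ↦ (sum_powerset_sdiff_neg_one_pow_card_mul_ite (hA x)).symm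

theorem card_filter_card_eq {A : ι → Finset α} {V : Finset α} (hA : ∀ x, A x ⊆ V) {F : ℕ → ℤ}
    (hF : ∀ T ⊆ V, (#{x | T ⊆ A x} : ℤ) = F #T) (m : ℕ) :
    (#{x | #(A x) = m} : ℤ) =
      (#V).choose m *
        ∑ i ∈ range (#V - m + 1), ((#V - m).choose i : ℤ) * ((-1) ^ i * F (m + i)) := by
  rw [card_eq_sum_card_fiberwise (f := A) (t := V.powersetCard m)
    (fun x hx ↦ mem_powersetCard.mpr ⟨hA x, (mem_filter.mp hx).2⟩), Nat.cast_sum]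
  have hfiber : ∀ M ∈ V.powersetCard m, (#{x ∈ {x | #(A x) = m} | A x = M} : ℤ) =
      ∑ i ∈ range (#V - m + 1), ((#V - m).choose i : ℤ) * ((-1) ^ i * F (m + i)) := by
    intro M hM
    obtain ⟨hMV, hMm⟩ := mem_powersetCard.mp hM
    rw [filter_filter, filter_congr (fun x _ ↦ and_iff_right_of_imp (fun h : A x = M ↦ h ▸ hMm))]
    have hunion : ∀ U ∈ (V \ M).powerset, (#{x | M ∪ U ⊆ A x} : ℤ) = F (m + #U) := by
      intro U hU
      have hUM : Disjoint M U := disjoint_of_subset_right (mem_powerset.mp hU) disjoint_sdiff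
      rw [hF _ (union_subset hMV ((mem_powerset.mp hU).trans sdiff_subset)),
        card_union_of_disjoint hUM, hMm]
    rw [card_filter_eq_eq_sum_powerset hA, sum_congr rfl fun U hU ↦ by rw [hunion U hU],
      sum_powerset_apply_card (fun j ↦ (-1) ^ j * F (m + j)), card_sdiff_of_subset hMV, hMm]
    simp_rw [nsmul_eq_mul]
  rw [sum_congr rfl hfiber, sum_const, card_powersetCard, nsmul_eq_mul]

end Finset

theorem eq_sum_range_choose_mul_of_succ_left {R : Type*} [NonAssocSemiring R] {f : ℕ → ℕ → R}
    (hf : ∀ a c, f (a + 1) c = f a (c + 1) + f a c) (a c : ℕ) :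
    f a c = ∑ s ∈ range (a + 1), (a.choose s : R) * f 0 (c + s) := by
  induction a generalizing c with
  | zero => simp
  | succ a ih =>
    rw [hf, ih, ih, sum_choose_succ_mul (fun s _ ↦ f 0 (c + s)), add_comm]
    simp_rw [add_right_comm c 1, ← add_assoc]

/-- By inclusion–exclusion, the number of permutations of `a + c` points fixing none of `c` marked
points. -/
def numPartialDerangements (a c : ℕ) : ℤ :=
  ∑ i ∈ range (c + 1), (c.choose i : ℤ) * ((-1) ^ i * (a + (c - i))! )

theorem numPartialDerangements_succ_left (a c : ℕ) :
    numPartialDerangements (a + 1) c =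
      numPartialDerangements a (c + 1) + numPartialDerangements a c := by
  rw [numPartialDerangements, numPartialDerangements, numPartialDerangements,
    sum_choose_succ_mul (fun i j ↦ (-1) ^ i * ((a + j)! : ℤ))]
  have hshift : ∀ i ∈ range (c + 1), (c.choose i : ℤ) * ((-1) ^ i * ((a + (c + 1 - i))! : ℤ)) =
      (c.choose i : ℤ) * ((-1) ^ i * ((a + 1 + (c - i))! : ℤ)) := by
    intro i hi
    rw [show a + (c + 1 - i) = a + 1 + (c - i) by have := mem_range.mp hi; omega]
  rw [sum_congr rfl hshift]
  simp_rw [pow_succ, mul_neg_one, neg_mul, mul_neg, sum_neg_distrib]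
  ring

theorem numPartialDerangements_zero_left (r : ℕ) :
    (numPartialDerangements 0 r : ℚ) = r ! * ∑ k ∈ range (r + 1), (-1) ^ k / (k ! : ℚ) := by
  rw [numPartialDerangements, mul_sum]
  push_cast
  refine sum_congr rfl fun k hk ↦ ?_
  rw [zero_add, Nat.cast_choose ℚ (Nat.lt_succ_iff.mp (mem_range.mp hk))]
  field_simp

theorem sum_Icc_fixedPointProb_mul_hypergeometric (m c h : ℕ) :
    ∑ ℓ ∈ Icc m (m + h),
      ((1 / (ℓ ! : ℚ)) * ∑ k ∈ range (m + c + h - ℓ + 1), (-1 : ℚ) ^ k / (k ! : ℚ)) *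
        (((m + c).choose m : ℚ) * (h.choose (ℓ - m) : ℚ) / ((m + c + h).choose ℓ : ℚ)) =
      (m + c).choose m * numPartialDerangements h c / (m + c + h)! := by
  rw [eq_sum_range_choose_mul_of_succ_left (f := fun a c ↦ (numPartialDerangements a c : ℚ))
      (fun a c ↦ by exact_mod_cast numPartialDerangements_succ_left a c),
    ← Ico_add_one_right_eq_Icc, sum_Ico_eq_sum_range, show m + h + 1 - m = h + 1 by omega,
    ← sum_range_reflect, mul_sum, sum_div]
  refine sum_congr rfl fun s hs ↦ ?_
  have hsh : s ≤ h := Nat.lt_succ_iff.mp (mem_range.mp hs)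
  have hfact :
      ((m + c + h).choose (m + (h - s)) : ℚ) * (m + (h - s))! * (c + s)! = (m + c + h)! := by
    rw [show c + s = m + c + h - (m + (h - s)) by omega]
    exact_mod_cast Nat.choose_mul_factorial_mul_factorial (by omega)
  rw [Nat.add_sub_cancel, show m + (h - s) - m = h - s by omega,
    show m + c + h - (m + (h - s)) = c + s by omega, choose_symm hsh,
    numPartialDerangements_zero_left, ← hfact]
  field_simp

theorem subset_filter_iff_shiftAdjacentOn {n h : ℕ} (hn : h < n) {T : Finset (Fin n)}
    (hT : ∀ k ∈ T, (k : ℕ) + h < n) (π : Equiv.Perm (Fin n)) :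
    T ⊆ ({k | (k : ℕ) + h < n ∧ (π (k + ⟨h, hn⟩) : ℕ) = π k + 1} : Finset (Fin n)) ↔
      Equiv.Perm.ShiftAdjacentOn h (T.map Fin.valEmbedding) π := by
  simp only [subset_iff, mem_filter, mem_univ, true_and, Equiv.Perm.ShiftAdjacentOn, mem_map,
    Fin.valEmbedding_apply]
  constructor
  · rintro H i j ⟨k, hk, hki⟩ hj
    obtain rfl := Fin.ext hki
    rw [show j = k + ⟨h, hn⟩ from Fin.ext (by rw [Fin.val_add_eq_of_add_lt (hT k hk), hj])]
    exact (H hk).2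
  · intro H k hk
    exact ⟨hT k hk, H k _ ⟨k, hk, rfl⟩ (Fin.val_add_eq_of_add_lt (hT k hk))⟩

theorem card_filter_card_shiftAdjacent_eq {n h : ℕ} (hh : 0 < h) (hn : h < n) {m : ℕ}
    (hm : m ≤ n - h) :
    (#{π : Equiv.Perm (Fin n) |
        #{k : Fin n | (k : ℕ) + h < n ∧ (π (k + ⟨h, hn⟩) : ℕ) = π k + 1} = m} : ℤ) =
      (n - h).choose m * numPartialDerangements h (n - h - m) := by
  have hV : #{k : Fin n | (k : ℕ) + h < n} = n - h := by
    rw [filter_congr fun k _ ↦ Nat.add_lt_iff_lt_sub_right, Fin.card_filter_val_lt]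
    omega
  rw [card_filter_card_eq (V := {k : Fin n | (k : ℕ) + h < n}) (F := fun j ↦ ((n - j)! : ℤ))
    (fun π ↦ monotone_filter_right _ fun _ _ hk ↦ hk.1), hV]
  · refine congrArg _ (sum_congr (by rw [Nat.sub_right_comm]) fun i hi ↦ ?_)
    rw [show n - (m + i) = h + (n - h - m - i) by have := mem_range.mp hi; omega]
  · intro T hT
    have hT' : ∀ k ∈ T, (k : ℕ) + h < n := fun k hk ↦ by simpa using hT hk
    simp_rw [subset_filter_iff_shiftAdjacentOn hn hT']
    rw [Equiv.Perm.card_filter_shiftAdjacentOn hh _ (by simpa using hT'), card_map]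

/-- For `1 ≤ h < n` and a uniformly random permutation `Π` of `[n]`, the probability that
`#{k ∈ [n-h] : Π(k+h) = Π(k)+1} = m` equals
`Σ_{ℓ=m}^{m+h} ((1/ℓ!) Σ_{k=0}^{n-ℓ} (-1)^k/k!) · C(n-h,m)·C(h,ℓ-m)/C(n,ℓ)`
for `0 ≤ m ≤ n-h`. -/
theorem stmt8 (n h m : ℕ) (hh : 1 ≤ h) (hn : h < n) (hm : m ≤ n - h) :
    ((Finset.univ.filter (fun π : Equiv.Perm (Fin n) =>
        (Finset.univ.filter (fun k : Fin n =>
          (k : ℕ) + h < n ∧ ((π (k + ⟨h, hn⟩) : ℕ) = (π k : ℕ) + 1))).card = m)).card : ℚ)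
      / (Nat.factorial n : ℚ)
    =
    ∑ ℓ ∈ Finset.Icc m (m + h),
      ((1 / (Nat.factorial ℓ : ℚ)) *
          ∑ k ∈ Finset.range (n - ℓ + 1), (-1 : ℚ) ^ k / (Nat.factorial k : ℚ))
        * (((n - h).choose m : ℚ) * ((h.choose (ℓ - m) : ℚ)) / ((n.choose ℓ : ℚ))) := by
  have hcount := card_filter_card_shiftAdjacent_eq hh hn hm
  obtain ⟨c, rfl⟩ : ∃ c, n = m + c + h := ⟨n - h - m, by omega⟩
  rw [show m + c + h - h = m + c by omega, show m + c - m = c by omega] at hcount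
  rw [show m + c + h - h = m + c by omega, sum_Icc_fixedPointProb_mul_hypergeometric]
  congr 1
  exact_mod_cast hcount
end

section
/- The random set U_n = {k ∈ [n] : Π(k+1 mod n) = Π(k)+1 mod n}, for Π uniform on S_n, is exchangeable: its distribution is invariant under every permutation of the index set [n]. Equivalently, P{U_n = A} depends only on #A. -/
def cyclicSucc {n : ℕ} (j : Fin n) : Fin n := ⟨((j : ℕ) + 1) % n, Nat.mod_lt _ j.pos⟩

/-!
Write `m = n + 1` and `M(A)` for the number of permutations having every `k ∈ A` as a cyclic
succession. The law of a random set is determined by its containment counts `M(A)`, so it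
suffices to show that `M(A) = m · (#Aᶜ - 1)!`, which depends only on `#A`.

Cut `ℤ/m` after every `c ∉ A` into `r = #Aᶜ` blocks; a permutation counted by `M(A)` maps each
block onto an arc of consecutive values. After a rotation, `m - 1 ∉ A`, so `0` starts a block
`[0, b]`. Sorting the permutations by the block end `z ≠ b` whose image immediately precedes
`π 0`, and relabelling positions so that the block ending at `z` sits right before `[0, b]`,
identifies each of the `r - 1` classes with the permutations counted by a set with `r - 1`
blocks. Hence `M(A) = (r - 1) · M(A')`, and with `r = 1` (only the `m` rotations) this gives the
formula.
-/

open Finset Equiv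
open scoped Nat

namespace Finset

variable {ι Ω : Type*} [Fintype ι] [DecidableEq ι] [Fintype Ω]

theorem card_subset_eq_sum_card_eq (F : Ω → Finset ι) (A : Finset ι) :
    #{ω | A ⊆ F ω} = ∑ B with A ⊆ B, #{ω | F ω = B} := by
  rw [card_eq_sum_card_fiberwise (f := F) (t := {B | A ⊆ B}) fun ω hω => by simpa using hω]
  refine sum_congr rfl fun B hB => ?_
  rw [filter_filter]
  refine congrArg card (filter_congr fun ω _ => ?_)
  simp only [mem_filter, mem_univ, true_and] at hB
  exact ⟨And.right, fun h => ⟨h ▸ hB, h⟩⟩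

theorem card_eq_of_card_subset_eq {Ω' : Type*} [Fintype Ω'] {F : Ω → Finset ι}
    {G : Ω' → Finset ι} (h : ∀ A, #{ω | A ⊆ F ω} = #{ω | A ⊆ G ω}) (A : Finset ι) :
    #{ω | F ω = A} = #{ω | G ω = A} := by
  induction A using WellFoundedGT.induction with
  | _ A ih =>
  have hA : A ∈ ({B | A ⊆ B} : Finset _) := by simp
  have hsum := h A
  rw [card_subset_eq_sum_card_eq, card_subset_eq_sum_card_eq, ← add_sum_erase _ _ hA,
    ← add_sum_erase _ _ hA, sum_congr rfl fun B hB => ih B ?_] at hsum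
  · exact add_right_cancel hsum
  · simp only [mem_erase, mem_filter, mem_univ, true_and] at hB
    exact hB.2.ssubset_of_ne (Ne.symm hB.1)

end Finset

section Successions

variable {n : ℕ}

theorem cyclicSucc_eq_add_one (j : Fin (n + 1)) : cyclicSucc j = j + 1 := by
  ext
  simp [cyclicSucc, Fin.val_add]

def successions (π : Perm (Fin (n + 1))) : Finset (Fin (n + 1)) :=
  {k | π (k + 1) = π k + 1}

@[simp] theorem mem_successions {π : Perm (Fin (n + 1))} {k : Fin (n + 1)} :
    k ∈ successions π ↔ π (k + 1) = π k + 1 := by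
  simp [successions]

theorem map_subset_successions_mul_iff (θ π : Perm (Fin (n + 1))) (s : Finset (Fin (n + 1))) :
    s.map θ.symm.toEmbedding ⊆ successions (π * θ) ↔
      ∀ k ∈ s, π (θ (θ.symm k + 1)) = π k + 1 := by
  simp only [subset_iff, mem_map_equiv, symm_symm, mem_successions, Perm.mul_apply]
  rw [← θ.symm.forall_congr_right]
  simp

theorem card_subset_successions_map_addRight (c : Fin (n + 1)) (A : Finset (Fin (n + 1))) :
    #{π | A.map (Equiv.addRight c).toEmbedding ⊆ successions π} = #{π | A ⊆ successions π} := by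
  refine (card_equiv (Equiv.mulRight (Equiv.addRight c).symm) fun π => ?_).symm
  have shift (k : Fin (n + 1)) : (Equiv.addRight c).symm (k + c + 1) = k + 1 := by
    simp [add_right_comm]
  have := map_subset_successions_mul_iff (Equiv.addRight c).symm π A
  simp only [symm_symm, coe_addRight, shift] at this
  simp only [mem_filter, mem_univ, true_and, coe_mulRight]
  rw [this, subset_iff]
  simp only [mem_successions]

theorem apply_eq_apply_zero_add {A : Finset (Fin (n + 1))} {π : Perm (Fin (n + 1))}
    (hA : A ⊆ successions π) (j : Fin (n + 1)) (hj : ∀ i < j, i ∈ A) : π j = π 0 + j := by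
  induction j using Fin.induction with
  | zero => simp
  | succ i ih =>
    rw [← Fin.coeSucc_eq_succ, mem_successions.1 (hA (hj _ Fin.castSucc_lt_succ)),
      ih fun k hk => hj k (hk.trans Fin.castSucc_lt_succ), add_assoc]

theorem card_subset_successions_of_forall_ne_last {A : Finset (Fin (n + 1))}
    (hA : ∀ i, i ≠ Fin.last n → i ∈ A) : #{π | A ⊆ successions π} = n + 1 := by
  calc #{π | A ⊆ successions π}
      = #(univ : Finset (Fin (n + 1))) := by
        refine card_nbij' (fun π => π 0) (fun a => Equiv.addLeft a) (by simp) ?_ ?_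
          fun a _ => by simp
        · intro a _
          simp [subset_iff, add_assoc]
        · intro π hπ
          replace hπ : A ⊆ successions π := by simpa using hπ
          ext j
          simp [apply_eq_apply_zero_add hπ j fun i hi => hA i (hi.trans_le (Fin.le_last j)).ne]
    _ = n + 1 := by simp

/-- On `[0, z]` this is `i ↦ i + (b + 1) mod (z + 1)`; above `z` it is the identity. -/
def rotateInitialSegment (b z i : ℕ) : ℕ :=
  if i + b < z then i + b + 1 else if i ≤ z then i + b - z else i

noncomputable def segmentRotation (b z : Fin (n + 1)) (hbz : b < z) : Perm (Fin (n + 1)) :=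
  Equiv.ofBijective
    (fun i => ⟨rotateInitialSegment b z i, by
      have := z.isLt
      unfold rotateInitialSegment
      split_ifs <;> omega⟩)
    (Finite.injective_iff_bijective.mp fun i j h => by
      have hval := Fin.val_eq_of_eq h
      have := Fin.lt_def.1 hbz
      simp only [rotateInitialSegment] at hval
      ext
      split_ifs at hval <;> omega)

theorem segmentRotation_val {b z : Fin (n + 1)} (hbz : b < z) (i : Fin (n + 1)) :
    (segmentRotation b z hbz i : ℕ) = rotateInitialSegment b z i := rfl

theorem segmentRotation_apply_add_one {b z : Fin (n + 1)} (hbz : b < z) {j : Fin (n + 1)}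
    (hb : segmentRotation b z hbz j ≠ b) (hz : segmentRotation b z hbz j ≠ z)
    (hlast : segmentRotation b z hbz j ≠ Fin.last n) :
    segmentRotation b z hbz (j + 1) = segmentRotation b z hbz j + 1 := by
  have := z.isLt
  simp only [ne_eq, Fin.ext_iff, segmentRotation_val, Fin.val_add_one, Fin.val_last,
    rotateInitialSegment] at *
  split_ifs at * <;> omega

theorem segmentRotation_apply_add_one_of_eq {b z : Fin (n + 1)} (hbz : b < z) {j : Fin (n + 1)}
    (hz : segmentRotation b z hbz j = z) : segmentRotation b z hbz (j + 1) = 0 := by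
  have := z.isLt
  simp only [Fin.ext_iff, segmentRotation_val, Fin.val_add_one, Fin.val_last, Fin.val_zero,
    rotateInitialSegment] at *
  split_ifs at * <;> omega

/-- Relabelling positions by the segment rotation turns the extra condition `π 0 = π z + 1`
into an ordinary succession, at the new position of `z`. -/
theorem card_subset_successions_glue {A : Finset (Fin (n + 1))} {b z : Fin (n + 1)}
    (hbz : b < z) (hb : b ∉ A) (hz : z ∉ A) (hlast : Fin.last n ∉ A) :
    #{π | A ⊆ successions π ∧ π 0 = π z + 1} =
      #{π | (insert z A).map (segmentRotation b z hbz).symm.toEmbedding ⊆ successions π} := by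
  set θ := segmentRotation b z hbz
  refine card_equiv (Equiv.mulRight θ) fun π => ?_
  have hzero : θ (θ.symm z + 1) = 0 :=
    segmentRotation_apply_add_one_of_eq hbz (θ.apply_symm_apply z)
  have hsucc (k : Fin (n + 1)) (hk : k ∈ A) : θ (θ.symm k + 1) = k + 1 := by
    have := segmentRotation_apply_add_one hbz (j := θ.symm k)
    simp only [θ, apply_symm_apply] at this ⊢
    exact this (by rintro rfl; exact hb hk) (by rintro rfl; exact hz hk)
      (by rintro rfl; exact hlast hk)
  simp only [mem_filter, mem_univ, true_and, coe_mulRight]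
  rw [map_subset_successions_mul_iff, forall_mem_insert, hzero, subset_iff, and_comm]
  exact and_congr_right fun _ => forall₂_congr fun k hk => by rw [hsucc k hk, mem_successions]

theorem card_subset_successions_eq_sum {A : Finset (Fin (n + 1))} {b : Fin (n + 1)}
    (hlast : Fin.last n ∉ A) (hbmin : ∀ i < b, i ∈ A) (hA : 1 < #Aᶜ) :
    #{π | A ⊆ successions π} = ∑ z ∈ Aᶜ.erase b, #{π | A ⊆ successions π ∧ π 0 = π z + 1} := by
  refine (card_eq_sum_card_fiberwise (f := fun π => π.symm (π 0 - 1)) fun π hπ => ?_).trans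
    (sum_congr rfl fun z _ => ?_)
  · replace hπ : A ⊆ successions π := by simpa using hπ
    set z := π.symm (π 0 - 1)
    have hz : π z + 1 = π 0 := by simp [z]
    have hzA : z ∉ A := fun hzA => by
      have h : z + 1 = Fin.last n + 1 :=
        π.injective ((mem_successions.1 (hπ hzA)).trans (by rw [hz, Fin.last_add_one]))
      exact hlast (add_right_cancel h ▸ hzA)
    refine mem_coe.2 (mem_erase.2 ⟨fun (hzb : z = b) => ?_, mem_compl.2 hzA⟩)
    -- otherwise the block `[0, b]` would be mapped onto all of `Fin (n + 1)`
    rw [hzb, apply_eq_apply_zero_add hπ b hbmin, add_assoc, add_eq_left, ← Fin.last_add_one,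
      add_left_inj] at hz
    refine hA.not_ge (card_le_one.2 fun c hc d hd => ?_)
    have hmin {e : Fin (n + 1)} (he : e ∈ Aᶜ) : e = Fin.last n :=
      le_antisymm (Fin.le_last e) (hz ▸ not_lt.1 fun h => mem_compl.1 he (hbmin e h))
    rw [hmin hc, hmin hd]
  · rw [filter_filter]
    refine congrArg card (filter_congr fun π _ => and_congr_right fun _ => ?_)
    rw [symm_apply_eq, sub_eq_iff_eq_add]

/-- For `A = univ` the truncated `#Aᶜ - 1 = 0` gives the `n + 1` rotations. -/
theorem card_subset_successions (A : Finset (Fin (n + 1))) :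
    #{π | A ⊆ successions π} = (n + 1) * (#Aᶜ - 1)! := by
  induction hr : #Aᶜ using Nat.strong_induction_on generalizing A with
  | _ r ih =>
  obtain hA | ⟨c, hc⟩ := Aᶜ.eq_empty_or_nonempty
  · rw [card_subset_successions_of_forall_ne_last fun i _ => by
      simp [(compl_eq_empty_iff A).1 hA], ← hr, hA]
    simp
  set A' := A.map (Equiv.addRight (Fin.last n - c)).toEmbedding
  have hlast : Fin.last n ∉ A' := by simpa [A'] using hc
  have hr' : #A'ᶜ = r := by rw [← hr, card_compl, card_compl, card_map]
  rw [← card_subset_successions_map_addRight (Fin.last n - c)]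
  obtain hr1 | hr1 := le_or_gt r 1
  · rw [card_subset_successions_of_forall_ne_last fun i hi => ?_, Nat.sub_eq_zero_of_le hr1]
    · simp
    by_contra hiA
    exact hr1.not_gt (hr' ▸ one_lt_card.2 ⟨i, mem_compl.2 hiA, _, mem_compl.2 hlast, hi⟩)
  have hne : A'ᶜ.Nonempty := ⟨_, mem_compl.2 hlast⟩
  set b := A'ᶜ.min' hne
  have hbA : b ∉ A' := mem_compl.1 (min'_mem _ hne)
  have hbmin (i) (hi : i < b) : i ∈ A' := by
    by_contra h
    exact (min'_le _ i (mem_compl.2 h)).not_gt hi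
  have hglued (z) (hz : z ∈ A'ᶜ.erase b) :
      #{π | A' ⊆ successions π ∧ π 0 = π z + 1} = (n + 1) * (r - 1 - 1)! := by
    obtain ⟨hzb, hz⟩ := mem_erase.1 hz
    have hbz : b < z := lt_of_le_of_ne (min'_le _ z hz) (Ne.symm hzb)
    rw [card_subset_successions_glue hbz hbA (mem_compl.1 hz) hlast]
    refine ih (r - 1) (by omega) _ ?_
    rw [card_compl, card_map, card_insert_of_notMem (mem_compl.1 hz), ← hr', card_compl]
    omega
  rw [card_subset_successions_eq_sum hlast hbmin (hr' ▸ hr1), sum_congr rfl hglued, sum_const,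
    card_erase_of_mem (min'_mem _ hne), hr', smul_eq_mul, mul_left_comm,
    Nat.mul_factorial_pred (by omega)]

end Successions

/-- The random set `U_n = {k ∈ [n] : Π(k+1 mod n) = Π(k)+1 mod n}`, for `Π` uniform on
`S_n`, is exchangeable: for every bijection `σ` of `[n]` and every `A ⊆ [n]`,
`P{U_n = σ(A)} = P{U_n = A}` (stated as the equivalent counting identity). -/
theorem stmt11 (n : ℕ) (σ : Equiv.Perm (Fin n)) (A : Finset (Fin n)) :
    (Finset.univ.filter (fun π : Equiv.Perm (Fin n) =>
      Finset.univ.filter (fun k : Fin n => π (cyclicSucc k) = cyclicSucc (π k))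
        = A.image σ)).card
    =
    (Finset.univ.filter (fun π : Equiv.Perm (Fin n) =>
      Finset.univ.filter (fun k : Fin n => π (cyclicSucc k) = cyclicSucc (π k))
        = A)).card := by
  cases n with
  | zero => rw [Subsingleton.elim (A.image σ) A]
  | succ n =>
    simp only [cyclicSucc_eq_add_one]
    change #{π | successions π = A.image σ} = #{π | successions π = A}
    have hσ (s : Finset (Fin (n + 1))) : s = A.image σ ↔ σ.finsetCongr.symm s = A := by
      rw [symm_apply_eq, finsetCongr_apply, map_eq_image, coe_toEmbedding]
    simp only [hσ]
    refine card_eq_of_card_subset_eq (fun B => ?_) A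
    simp only [finsetCongr_symm, finsetCongr_apply, subset_map_symm, card_subset_successions,
      card_compl, card_map]
end

section
/- The number of derangements D(n) of [n] satisfies D(n) = #{σ ∈ C_n : Θ_n(σ) = ∅} + #{σ ∈ C_{n+1} : Θ_{n+1}(σ) = ∅}, where C_j is the set of j-cycles in S_j and Θ_j(σ) = {k ∈ [j] : σ(k) = k+1 mod j}. -/
/-- `σ` consists of a single cycle through all of `Fin n` (an `n`-cycle). -/
def IsFullCycle {n : ℕ} (σ : Equiv.Perm (Fin n)) : Prop :=
  ∀ x y : Fin n, ∃ i : ℕ, (σ ^ i) x = y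

/-!
Inclusion–exclusion over the set `T` of prescribed arcs `k ↦ k + 1`. A permutation of `Fin j`
containing these arcs is `finRotate j * π` with `π` a permutation of `s = Tᶜ`; its first-return
map to `s` is `ρ_s * π`, where `ρ_s` is the first-return map of `finRotate j`, and a permutation
is a full cycle iff its first-return map to a set meeting every orbit is. So exactly
`(j - 1 - #T)!` full cycles contain the arcs of `T`, and the full cycles avoiding every arc number
`∑ₖ (-1)ᵏ C(j, k) (j - 1 - k)!`. By Pascal's rule the sum of these for `j = n` and `j = n + 1`
is `∑ₖ (-1)ᵏ C(n, k) (n - k)! = D(n)`.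
-/

open Finset
open scoped Nat

namespace Equiv.Perm

variable {α : Type*}

theorem isCycleOn_univ_iff {f : Perm α} :
    f.IsCycleOn _root_.Set.univ ↔ ∀ x y, f.SameCycle x y := by
  simp [IsCycleOn, f.bijective]

theorem isCycleOn_univ_iff_cycleType [Fintype α] [DecidableEq α] (h : 2 ≤ Fintype.card α)
    {f : Perm α} : f.IsCycleOn _root_.Set.univ ↔ f.cycleType = {Fintype.card α} := by
  have huniv : (_root_.Set.univ : Set α).Nontrivial :=
    _root_.Set.nontrivial_univ_iff.2 (Fintype.one_lt_card_iff_nontrivial.1 h)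
  constructor
  · intro hf
    have hcyc : f.IsCycle :=
      isCycle_iff_exists_isCycleOn.2 ⟨_, huniv, hf, fun x _ => _root_.Set.mem_univ x⟩
    have hsupp : f.support = univ :=
      eq_univ_of_forall fun x => mem_support.2 (hf.apply_ne huniv (_root_.Set.mem_univ x))
    rw [hcyc.cycleType, hsupp, Finset.card_univ]
  · intro hf
    have hcyc : f.IsCycle := card_cycleType_eq_one.1 (by simp [hf])
    have hsupp : f.support = univ := eq_univ_of_card _ (by rw [← sum_cycleType, hf]; simp)
    refine isCycleOn_univ_iff.2 fun x y => hcyc.sameCycle ?_ ?_ <;>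
      rw [← mem_support, hsupp] <;> exact mem_univ _

theorem card_isCycleOn_univ [Finite α] :
    Nat.card {f : Perm α // f.IsCycleOn _root_.Set.univ} = (Nat.card α - 1)! := by
  classical
  have := Fintype.ofFinite α
  rcases le_or_gt 2 (Fintype.card α) with h | h
  · rw [Nat.card_eq_fintype_card, Fintype.card_subtype, Nat.card_eq_fintype_card]
    simp_rw [isCycleOn_univ_iff_cycleType h]
    rw [card_of_cycleType_singleton h le_rfl, Nat.choose_self, mul_one]
  · have : Subsingleton α := Fintype.card_le_one_iff_subsingleton.1 (by omega)
    rw [Nat.card_congr (Equiv.subtypeUnivEquiv fun f => isCycleOn_of_subsingleton f _),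
      Nat.card_perm, Nat.card_eq_fintype_card]
    interval_cases Fintype.card α <;> rfl

theorem pow_apply_eq_of_eqOn_compl {σ ρ : Perm α} {s : Set α} (h : ∀ x ∉ s, σ x = ρ x)
    {z : α} {k : ℕ} (hk : ∀ i < k, (ρ ^ i) z ∉ s) : (σ ^ k) z = (ρ ^ k) z := by
  induction k with
  | zero => rfl
  | succ k ih =>
    rw [pow_succ', mul_apply, ih fun i hi => hk i (by omega), h _ (hk k (by omega)),
      ← mul_apply, ← pow_succ']

theorem exists_sameCycle_mem_of_eqOn_compl [Finite α] {σ ρ : Perm α} {s : Set α}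
    (h : ∀ x ∉ s, σ x = ρ x) (hρ : ∀ x, ∃ y ∈ s, ρ.SameCycle x y) (x : α) :
    ∃ y ∈ s, σ.SameCycle x y := by
  classical
  have hreach : ∃ k, (ρ ^ k) x ∈ s := by
    obtain ⟨y, hy, hxy⟩ := hρ x
    obtain ⟨k, rfl⟩ := hxy.exists_nat_pow_eq
    exact ⟨k, hy⟩
  refine ⟨(σ ^ Nat.find hreach) x, ?_, sameCycle_pow_right.2 SameCycle.rfl⟩
  rw [pow_apply_eq_of_eqOn_compl h fun i hi => Nat.find_min hreach hi]
  exact Nat.find_spec hreach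

section FirstReturn

variable [Finite α] (σ : Perm α) (s : Set α)

theorem exists_pos_pow_apply_mem {x : α} (hx : x ∈ s) : ∃ k, 0 < k ∧ (σ ^ k) x ∈ s :=
  ⟨orderOf σ, orderOf_pos σ, by rwa [pow_orderOf_eq_one]⟩

variable [DecidablePred (· ∈ s)]

noncomputable def returnTime (x : s) : ℕ := Nat.find (exists_pos_pow_apply_mem σ s x.2)

variable {σ s}

theorem returnTime_pos (x : s) : 0 < returnTime σ s x :=
  (Nat.find_spec (exists_pos_pow_apply_mem σ s x.2)).1

theorem pow_returnTime_apply_mem (x : s) : (σ ^ returnTime σ s x) x ∈ s :=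
  (Nat.find_spec (exists_pos_pow_apply_mem σ s x.2)).2

theorem pow_apply_notMem_of_lt_returnTime {x : s} {k : ℕ} (hk0 : 0 < k)
    (hk : k < returnTime σ s x) : (σ ^ k) x ∉ s :=
  fun h => Nat.find_min (exists_pos_pow_apply_mem σ s x.2) hk ⟨hk0, h⟩

theorem returnTime_le {x : s} {k : ℕ} (hk0 : 0 < k) (hk : (σ ^ k) x ∈ s) :
    returnTime σ s x ≤ k :=
  Nat.find_min' (exists_pos_pow_apply_mem σ s x.2) ⟨hk0, hk⟩

theorem returnTime_eq {x : s} {k : ℕ} (hk0 : 0 < k) (hk : (σ ^ k) x ∈ s)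
    (hmin : ∀ i, 0 < i → i < k → (σ ^ i) x ∉ s) : returnTime σ s x = k :=
  (returnTime_le hk0 hk).antisymm <| not_lt.1 fun hlt =>
    hmin _ (returnTime_pos x) hlt (pow_returnTime_apply_mem x)

variable (σ s)

theorem injective_pow_returnTime_apply :
    Function.Injective fun x : s =>
      (⟨(σ ^ returnTime σ s x) x, pow_returnTime_apply_mem x⟩ : s) := by
  suffices key : ∀ x y : s, returnTime σ s x ≤ returnTime σ s y →
      (σ ^ returnTime σ s x) x = (σ ^ returnTime σ s y) y → x = y by
    intro x y h
    have h' := congrArg Subtype.val h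
    rcases le_total (returnTime σ s x) (returnTime σ s y) with hle | hle
    exacts [key x y hle h', (key y x hle h'.symm).symm]
  intro x y hle h
  have hyx : (σ ^ (returnTime σ s y - returnTime σ s x)) y = x := by
    apply (σ ^ returnTime σ s x).injective
    rw [← mul_apply, ← pow_add, Nat.add_sub_cancel' hle, h]
  obtain hzero | hpos := Nat.eq_zero_or_pos (returnTime σ s y - returnTime σ s x)
  · rw [hzero, pow_zero, one_apply] at hyx
    exact Subtype.ext hyx.symm
  · exact absurd (hyx ▸ x.2) (pow_apply_notMem_of_lt_returnTime hpos
      (Nat.sub_lt (returnTime_pos y) (returnTime_pos x)))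

noncomputable def firstReturn : Perm s :=
  Equiv.ofBijective _ (Finite.injective_iff_bijective.1 (injective_pow_returnTime_apply σ s))

variable {σ s}

theorem firstReturn_apply (x : s) : (firstReturn σ s x : α) = (σ ^ returnTime σ s x) x := rfl

theorem sameCycle_firstReturn_iff {x y : s} :
    (firstReturn σ s).SameCycle x y ↔ σ.SameCycle x y := by
  constructor
  · intro h
    obtain ⟨i, rfl⟩ := h.exists_nat_pow_eq
    clear h
    induction i with
    | zero => exact SameCycle.rfl
    | succ i ih =>
      rw [pow_succ', mul_apply, firstReturn_apply]
      exact sameCycle_pow_right.2 ih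
  · intro h
    obtain ⟨i, hi⟩ := h.exists_nat_pow_eq
    clear h
    induction i using Nat.strong_induction_on generalizing x with
    | _ i ih =>
      obtain rfl | hi0 := Nat.eq_zero_or_pos i
      · rw [pow_zero, one_apply] at hi
        rw [Subtype.ext hi]
      · have hle := returnTime_le hi0 (hi ▸ y.2)
        have hstep : (σ ^ (i - returnTime σ s x)) (firstReturn σ s x) = y := by
          rw [firstReturn_apply, ← mul_apply, ← pow_add, Nat.sub_add_cancel hle, hi]
        exact sameCycle_apply_left.1
          (ih _ (Nat.sub_lt hi0 (returnTime_pos x)) hstep)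

theorem isCycleOn_univ_iff_firstReturn (hs : ∀ x, ∃ y ∈ s, σ.SameCycle x y) :
    σ.IsCycleOn _root_.Set.univ ↔ (firstReturn σ s).IsCycleOn _root_.Set.univ := by
  simp only [isCycleOn_univ_iff, Subtype.forall, sameCycle_firstReturn_iff]
  refine ⟨fun h x _ y _ => h x y, fun h x y => ?_⟩
  obtain ⟨u, hu, hxu⟩ := hs x
  obtain ⟨v, hv, hyv⟩ := hs y
  exact hxu.trans ((h u hu v hv).trans hyv.symm)

theorem firstReturn_mul_ofSubtype (ρ : Perm α) (π : Perm s) :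
    firstReturn (ρ * ofSubtype π) s = firstReturn ρ s * π := by
  refine Equiv.ext fun x => Subtype.ext ?_
  have hagree : ∀ z ∉ s, (ρ * ofSubtype π) z = ρ z := fun z hz => by
    rw [mul_apply, ofSubtype_apply_of_not_mem π hz]
  have hpow : ∀ k, 0 < k → k ≤ returnTime ρ s (π x) →
      ((ρ * ofSubtype π) ^ k) x = (ρ ^ k) (π x) := by
    intro k hk0 hk
    obtain ⟨k, rfl⟩ := Nat.exists_eq_add_of_lt hk0
    rw [zero_add, pow_succ, mul_apply, mul_apply, ofSubtype_apply_coe,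
      pow_apply_eq_of_eqOn_compl hagree, ← mul_apply, ← pow_succ]
    intro i hi
    rw [← mul_apply, ← pow_succ]
    exact pow_apply_notMem_of_lt_returnTime i.succ_pos (by omega)
  have hr := returnTime_pos (σ := ρ) (π x)
  have hret : returnTime (ρ * ofSubtype π) s x = returnTime ρ s (π x) := by
    refine returnTime_eq hr ?_ fun i hi0 hi => ?_
    · rw [hpow _ hr le_rfl]
      exact pow_returnTime_apply_mem _
    · rw [hpow i hi0 hi.le]
      exact pow_apply_notMem_of_lt_returnTime hi0 hi
  rw [mul_apply, firstReturn_apply, firstReturn_apply, hret, hpow _ hr le_rfl]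

theorem isCycleOn_univ_mul_ofSubtype_iff {ρ : Perm α} (hρ : ρ.IsCycleOn _root_.Set.univ)
    (π : Perm s) :
    (ρ * ofSubtype π).IsCycleOn _root_.Set.univ ↔
      (firstReturn ρ s * π).IsCycleOn _root_.Set.univ := by
  obtain hs | ⟨u, hu⟩ := s.eq_empty_or_nonempty
  · have : IsEmpty s := by rw [hs]; infer_instance
    rw [Subsingleton.elim π 1, map_one, mul_one]
    exact iff_of_true hρ (isCycleOn_of_subsingleton _ _)
  · rw [← firstReturn_mul_ofSubtype, isCycleOn_univ_iff_firstReturn (s := s)]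
    refine exists_sameCycle_mem_of_eqOn_compl (s := s) (ρ := ρ) (fun z hz => ?_)
      (fun x => ⟨u, hu, isCycleOn_univ_iff.1 hρ x u⟩)
    rw [mul_apply, ofSubtype_apply_of_not_mem π hz]

end FirstReturn

theorem card_isCycleOn_univ_eqOn_compl [Finite α] {ρ : Perm α}
    (hρ : ρ.IsCycleOn _root_.Set.univ) (s : Set α) :
    Nat.card {σ : Perm α // (∀ x ∉ s, σ x = ρ x) ∧ σ.IsCycleOn _root_.Set.univ} =
      (Nat.card s - 1)! := by
  classical
  let extend : Perm s ≃ {σ : Perm α // ∀ x ∉ s, σ x = ρ x} :=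
    (Perm.subtypeEquivSubtypePerm (· ∈ s)).trans <|
      (Equiv.mulLeft ρ).subtypeEquiv fun f => by simp [mul_apply]
  calc Nat.card {σ : Perm α // (∀ x ∉ s, σ x = ρ x) ∧ σ.IsCycleOn _root_.Set.univ}
      = Nat.card {π : Perm s // (ρ * ofSubtype π).IsCycleOn _root_.Set.univ} :=
        Nat.card_congr ((subtypeSubtypeEquivSubtypeInter _ _).symm.trans
          (extend.subtypeEquiv fun _ => Iff.rfl).symm)
    _ = Nat.card {π : Perm s // (firstReturn ρ s * π).IsCycleOn _root_.Set.univ} :=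
        Nat.card_congr (Equiv.subtypeEquivRight (isCycleOn_univ_mul_ofSubtype_iff hρ))
    _ = Nat.card {τ : Perm s // τ.IsCycleOn _root_.Set.univ} :=
        Nat.card_congr ((Equiv.mulLeft (firstReturn ρ s)).subtypeEquiv fun _ => Iff.rfl)
    _ = (Nat.card s - 1)! := card_isCycleOn_univ

end Equiv.Perm

open Equiv Perm

theorem cyclicSucc_eq_finRotate {n : ℕ} (k : Fin n) : cyclicSucc k = finRotate n k := by
  have : NeZero n := ⟨k.pos.ne'⟩
  rw [finRotate_apply]
  ext
  simp [cyclicSucc, Fin.val_add]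

theorem isFullCycle_iff_isCycleOn_univ {n : ℕ} {σ : Perm (Fin n)} :
    IsFullCycle σ ↔ σ.IsCycleOn Set.univ := by
  rw [isCycleOn_univ_iff]
  exact forall₂_congr fun x y =>
    ⟨fun ⟨i, hi⟩ => ⟨i, by simpa using hi⟩, SameCycle.exists_nat_pow_eq⟩

theorem isCycleOn_univ_finRotate (n : ℕ) : (finRotate n).IsCycleOn Set.univ := by
  rcases le_or_gt 2 n with h | h
  · rw [isCycleOn_univ_iff_cycleType (by simpa using h), Fintype.card_fin]
    exact cycleType_finRotate_of_le h
  · have : Subsingleton (Fin n) := Fin.subsingleton_iff_le_one.2 (by omega)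
    exact isCycleOn_of_subsingleton _ _

theorem card_isFullCycle_eq_cyclicSucc_on {j : ℕ} (T : Finset (Fin j)) :
    Nat.card {σ : Perm (Fin j) // IsFullCycle σ ∧ ∀ i ∈ T, σ i = cyclicSucc i} =
      (j - 1 - #T)! := by
  have h := card_isCycleOn_univ_eqOn_compl (isCycleOn_univ_finRotate j) (↑Tᶜ : Set (Fin j))
  rw [Nat.card_coe_set_eq, Set.ncard_coe_finset, card_compl, Fintype.card_fin] at h
  rw [Nat.sub_right_comm, ← h]
  refine Nat.card_congr (Equiv.subtypeEquivRight fun σ => ?_)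
  simp [isFullCycle_iff_isCycleOn_univ, cyclicSucc_eq_finRotate, and_comm]

theorem ncard_isFullCycle_forall_ne_cyclicSucc (j : ℕ) :
    ({σ : Perm (Fin j) | IsFullCycle σ ∧ ∀ k, σ k ≠ cyclicSucc k}.ncard : ℤ) =
      ∑ k ∈ range (j + 1), (-1) ^ k * j.choose k * ((j - 1 - k)! : ℤ) := by
  classical
  let S : Fin j → Finset (Perm (Fin j)) := fun i => {σ | σ i = cyclicSucc i}
  let f : Perm (Fin j) → ℤ := fun σ => if IsFullCycle σ then 1 else 0
  have hcount : ∀ t : Finset (Fin j), ∑ σ ∈ t.inf S, f σ = ((j - 1 - #t)! : ℤ) := by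
    intro t
    rw [← card_isFullCycle_eq_cyclicSucc_on t, Finset.sum_boole, Nat.card_eq_fintype_card,
      Fintype.card_subtype]
    congr 2
    ext σ
    simp [S, Finset.mem_inf, and_comm]
  have hie := inclusion_exclusion_sum_inf_compl univ S f
  simp_rw [hcount] at hie
  rw [sum_powerset_apply_card (fun k => (-1) ^ k • ((j - 1 - k)! : ℤ))] at hie
  have hlhs : ∑ σ ∈ univ.inf fun i => (S i)ᶜ, f σ =
      ({σ | IsFullCycle σ ∧ ∀ k, σ k ≠ cyclicSucc k} : Set (Perm (Fin j))).ncard := by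
    rw [Set.ncard_eq_toFinset_card', Finset.sum_boole]
    congr 2
    ext σ
    simp [S, Finset.mem_inf, and_comm]
  rw [← hlhs, hie, card_univ, Fintype.card_fin]
  simp [mul_comm, mul_assoc]

theorem numDerangements_eq_sum_choose_mul_factorial (n : ℕ) :
    (numDerangements n : ℤ) =
      ∑ k ∈ range (n + 1), (-1) ^ k * n.choose k * ((n - k)! : ℤ) := by
  rw [numDerangements_sum]
  refine sum_congr rfl fun k hk => ?_
  have hk : k ≤ n := mem_range_succ_iff.1 hk
  rw [Nat.ascFactorial_eq_factorial_mul_choose, Nat.add_sub_cancel' hk, Nat.choose_symm hk]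
  push_cast
  ring

theorem numDerangements_eq_sum_add_sum (n : ℕ) :
    (numDerangements n : ℤ) =
      ∑ k ∈ range (n + 1), (-1) ^ k * n.choose k * ((n - 1 - k)! : ℤ) +
      ∑ k ∈ range (n + 1 + 1), (-1) ^ k * (n + 1).choose k * ((n + 1 - 1 - k)! : ℤ) := by
  have hshift : ∑ k ∈ range (n + 1), (-1) ^ k * n.choose k * ((n - k)! : ℤ) =
      ∑ k ∈ range (n + 1), (-1) ^ (k + 1) * n.choose (k + 1) * ((n - (k + 1))! : ℤ) +
        n ! := by
    have h := sum_range_succ' (fun k => (-1) ^ k * n.choose k * ((n - k)! : ℤ)) (n + 1)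
    rw [sum_range_succ, Nat.choose_succ_self] at h
    simpa using h
  rw [numDerangements_eq_sum_choose_mul_factorial, hshift,
    sum_range_succ' (fun k => (-1) ^ k * (n + 1).choose k * ((n + 1 - 1 - k)! : ℤ)),
    ← add_assoc, ← sum_add_distrib]
  congr 1
  · refine sum_congr rfl fun k _ => ?_
    rw [Nat.choose_succ_succ', show n + 1 - 1 - (k + 1) = n - 1 - k by omega,
      show n - (k + 1) = n - 1 - k by omega]
    push_cast
    ring
  · simp

/-- The number of derangements `D(n)` of `[n]` satisfies
`D(n) = #{σ ∈ C_n : Θ_n(σ) = ∅} + #{σ ∈ C_{n+1} : Θ_{n+1}(σ) = ∅}`, where `C_j` is the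
set of full `j`-cycles in `S_j` and `Θ_j(σ) = {k ∈ [j] : σ(k) = k+1 mod j}`. -/
theorem stmt13 (n : ℕ) :
    numDerangements n
    =
    Set.ncard {σ : Equiv.Perm (Fin n) | IsFullCycle σ ∧
        ∀ k : Fin n, σ k ≠ cyclicSucc k}
    + Set.ncard {σ : Equiv.Perm (Fin (n + 1)) | IsFullCycle σ ∧
        ∀ k : Fin (n + 1), σ k ≠ cyclicSucc k} := by
  have h := numDerangements_eq_sum_add_sum n
  rw [← ncard_isFullCycle_forall_ne_cyclicSucc, ← ncard_isFullCycle_forall_ne_cyclicSucc] at h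
  exact_mod_cast h
end
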